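/- arXiv:1203.4315 — 5 statements merged into one kernel-verified Lean document; each statement's English description precedes it below -/
import Mathlib

section
/- Let u₀ ∈ L^∞(ℝ) and let u(x,t) = (1/(2√(πt))) ∫_ℝ exp(−(x−y)²/(4t)) u₀(y) dy be the solution of the heat equation u_t = u_xx with initial value u₀. Then for all L > 0, t > 0 and a, b ∈ ℝ: sup_{x∈[−L,L]} |u(√t·x, t) − (a·F(−x) + b·F(x))| ≤ (1/(2√π)) ∫_0^∞ ρ_L(z)·(|u₀(−√t·z) − a| + |u₀(√t·z) − b|) dz, where F(z) = (1/(2√π)) ∫_{−∞}^z e^{−y²/4} dy and ρ_L(z) = sup_{z₀∈[−L,L]} e^{−(z−z₀)²/4}. -/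
/-!
Substituting `y = √t z`, `u (√t x) t` is the average of `u₀ (√t ·)` against the Gaussian
`exp (-(z - x) ^ 2 / 4) / (2 √π)`, and `a F (-x) + b F x` is the average, against the same
Gaussian, of the step function equal to `a` on `(-∞, 0)` and `b` on `(0, ∞)`. Folding the
negative half-line onto the positive one, the error is an integral over `(0, ∞)` of Gaussians
centred at `x` and `-x`, both of which lie in `[-L, L]` and are therefore dominated by `ρ_L`.
-/

open Filter Real MeasureTheory Set

section HalfLine

variable {E : Type*} [NormedAddCommGroup E] [NormedSpace ℝ E]

theorem integral_Iio_eq_integral_Ioi_sub (f : ℝ → E) (c : ℝ) :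
    ∫ y in Iio c, f y = ∫ z in Ioi 0, f (c - z) := by
  have hpre : (fun z => c - z) ⁻¹' Iio c = Ioi 0 := by ext z; simp
  rw [← hpre, (Measure.measurePreserving_sub_left volume c).setIntegral_preimage_emb
    (measurableEmbedding_subLeft c)]

theorem integral_eq_integral_Ioi_comp_neg_add {h : ℝ → E} (hh : Integrable h) :
    ∫ z, h z = ∫ z in Ioi 0, (h (-z) + h z) := by
  rw [integral_add hh.comp_neg.integrableOn hh.integrableOn, integral_comp_neg_Ioi, neg_zero,
    intervalIntegral.integral_Iic_add_Ioi hh.integrableOn hh.integrableOn]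

end HalfLine

theorem abs_integral_sub_le_integral_Ioi {k v ρ : ℝ → ℝ} (a b : ℝ) (hk : Integrable k)
    (hkv : Integrable fun z => k z * v z) (hρk : ∀ z > 0, |k (-z)| ≤ ρ z ∧ |k z| ≤ ρ z)
    (hρv : IntegrableOn (fun z => ρ z * (|v (-z) - a| + |v z - b|)) (Ioi 0)) :
    |(∫ z, k z * v z) - ((a * ∫ z in Ioi 0, k (-z)) + b * ∫ z in Ioi 0, k z)| ≤
      ∫ z in Ioi 0, ρ z * (|v (-z) - a| + |v z - b|) := by
  have hstep : (a * ∫ z in Ioi 0, k (-z)) + b * ∫ z in Ioi 0, k z =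
      ∫ z in Ioi 0, (a * k (-z) + b * k z) := by
    rw [integral_add (hk.comp_neg.integrableOn.const_mul a) (hk.integrableOn.const_mul b),
      integral_const_mul, integral_const_mul]
  have hkv' : IntegrableOn (fun z => k (-z) * v (-z) + k z * v z) (Ioi 0) :=
    hkv.comp_neg.integrableOn.add hkv.integrableOn
  have hk' : IntegrableOn (fun z => a * k (-z) + b * k z) (Ioi 0) :=
    (hk.comp_neg.integrableOn.const_mul a).add (hk.integrableOn.const_mul b)
  rw [integral_eq_integral_Ioi_comp_neg_add hkv, hstep, ← integral_sub hkv' hk',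
    ← Real.norm_eq_abs]
  refine norm_integral_le_of_norm_le hρv ?_
  filter_upwards [ae_restrict_mem measurableSet_Ioi] with z hz
  obtain ⟨hneg, hpos⟩ := hρk z hz
  calc ‖k (-z) * v (-z) + k z * v z - (a * k (-z) + b * k z)‖
      = |k (-z) * (v (-z) - a) + k z * (v z - b)| := by rw [Real.norm_eq_abs]; congr 1; ring
    _ ≤ |k (-z)| * |v (-z) - a| + |k z| * |v z - b| := by
      rw [← abs_mul, ← abs_mul]; exact abs_add_le _ _
    _ ≤ ρ z * (|v (-z) - a| + |v z - b|) := by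
      rw [mul_add]; gcongr

section GaussianEnvelope

variable {a b : ℝ}

theorem abs_sub_projIcc_le (h : a ≤ b) (z : ℝ) {w : ℝ} (hw : w ∈ Icc a b) :
    |z - projIcc a b h z| ≤ |z - w| := by
  rw [coe_projIcc]
  rcases le_total z a with hza | hza
  · rw [min_eq_right (hza.trans h), max_eq_left hza, abs_of_nonpos (by linarith),
      abs_of_nonpos (by linarith [hw.1])]
    linarith [hw.1]
  rcases le_total z b with hzb | hzb
  · rw [min_eq_right hzb, max_eq_right hza]; simp
  · rw [min_eq_left hzb, max_eq_right h, abs_of_nonneg (by linarith),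
      abs_of_nonneg (by linarith [hw.2])]
    linarith [hw.2]

theorem bddAbove_range_exp_neg_sq_sub (z : ℝ) (s : Set ℝ) :
    BddAbove (range fun w : s => exp (-(z - w) ^ 2 / 4)) := by
  refine ⟨1, ?_⟩
  rintro _ ⟨w, rfl⟩
  exact exp_le_one_iff.mpr (by nlinarith [sq_nonneg (z - w)])

theorem exp_neg_sq_sub_le_ciSup {s : Set ℝ} {z w : ℝ} (hw : w ∈ s) :
    exp (-(z - w) ^ 2 / 4) ≤ ⨆ w : s, exp (-(z - w) ^ 2 / 4) :=
  le_ciSup (bddAbove_range_exp_neg_sq_sub z _) ⟨w, hw⟩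

theorem ciSup_Icc_exp_neg_sq_sub (h : a ≤ b) (z : ℝ) :
    ⨆ w : Icc a b, exp (-(z - w) ^ 2 / 4) = exp (-(z - projIcc a b h z) ^ 2 / 4) := by
  have : Nonempty (Icc a b) := (nonempty_Icc.2 h).to_subtype
  refine le_antisymm (ciSup_le fun w => ?_) (exp_neg_sq_sub_le_ciSup (projIcc a b h z).2)
  gcongr exp (-?_ / 4)
  exact sq_le_sq.mpr (abs_sub_projIcc_le h z w.2)

theorem integrable_exp_neg_sq_sub (c : ℝ) : Integrable fun z : ℝ => exp (-(z - c) ^ 2 / 4) := by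
  convert (integrable_exp_neg_mul_sq (b := 1 / 4) (by norm_num)).comp_sub_right c using 2 with z
  ring_nf

theorem exp_neg_sq_sub_le {M w : ℝ} (hw : |w| ≤ M) (z : ℝ) :
    exp (-(z - w) ^ 2 / 4) ≤ exp (M ^ 2 / 4) * exp (-z ^ 2 / 8) := by
  rw [← exp_add]
  gcongr
  -- `z ^ 2 ≤ 2 (z - w) ^ 2 + 2 w ^ 2`
  nlinarith [sq_abs w, sq_nonneg (z - 2 * w), abs_nonneg w]

theorem integrable_ciSup_Icc_exp_neg_sq_sub (h : a ≤ b) :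
    Integrable fun z => ⨆ w : Icc a b, exp (-(z - w) ^ 2 / 4) := by
  simp_rw [ciSup_Icc_exp_neg_sq_sub h]
  have hdom : Integrable fun z : ℝ => exp ((|a| + |b|) ^ 2 / 4) * exp (-z ^ 2 / 8) := by
    refine Integrable.const_mul ?_ _
    convert (integrable_exp_neg_mul_sq (b := 1 / 8) (by norm_num)) using 2 with z
    ring_nf
  refine hdom.mono' (by fun_prop) (Eventually.of_forall fun z => ?_)
  rw [norm_of_nonneg (exp_pos _).le]
  refine exp_neg_sq_sub_le ?_ z
  obtain ⟨hw₁, hw₂⟩ := (projIcc a b h z).2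
  exact abs_le.mpr ⟨by linarith [neg_abs_le a, abs_nonneg b], by linarith [le_abs_self b, abs_nonneg a]⟩

end GaussianEnvelope

theorem heat_integral_rescale {t : ℝ} (ht : 0 < t) (f : ℝ → ℝ) (x : ℝ) :
    1 / (2 * sqrt (π * t)) * ∫ y, exp (-(sqrt t * x - y) ^ 2 / (4 * t)) * f y =
      1 / (2 * sqrt π) * ∫ z, exp (-(z - x) ^ 2 / 4) * f (sqrt t * z) := by
  have hs : 0 < sqrt t := sqrt_pos.mpr ht
  have hsub := Measure.integral_comp_mul_left
    (fun y => exp (-(sqrt t * x - y) ^ 2 / (4 * t)) * f y) (sqrt t)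
  have hkernel : ∀ z, exp (-(sqrt t * x - sqrt t * z) ^ 2 / (4 * t)) = exp (-(z - x) ^ 2 / 4) := by
    intro z
    rw [← mul_sub, mul_pow, sq_sqrt ht.le]
    field_simp
    ring_nf
  simp only [hkernel, smul_eq_mul, abs_inv, abs_of_pos hs] at hsub
  rw [hsub, sqrt_mul pi_pos.le]
  field_simp

theorem stmt_3 (u₀ : ℝ → ℝ) (hmeas : Measurable u₀) (C : ℝ) (hbd : ∀ x, |u₀ x| ≤ C)
    (u : ℝ → ℝ → ℝ)
    (hu : ∀ x t, 0 < t →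
      u x t = (1 / (2 * Real.sqrt (π * t))) * ∫ y : ℝ, Real.exp (-(x - y)^2 / (4 * t)) * u₀ y)
    (F : ℝ → ℝ) (hF : ∀ z, F z = (1 / (2 * Real.sqrt π)) * ∫ y in Iio z, Real.exp (-y^2 / 4))
    (ρ : ℝ → ℝ → ℝ)
    (hρ : ∀ L z, ρ L z = ⨆ z₀ : Icc (-L) L, Real.exp (-(z - (z₀ : ℝ))^2 / 4)) :
    ∀ L > 0, ∀ t > 0, ∀ a b : ℝ, ∀ x ∈ Icc (-L) L,
      |u (Real.sqrt t * x) t - (a * F (-x) + b * F x)| ≤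
        (1 / (2 * Real.sqrt π)) *
          ∫ z in Ioi (0:ℝ),
            ρ L z * (|u₀ (-(Real.sqrt t) * z) - a| + |u₀ (Real.sqrt t * z) - b|) := by
  intro L hL t ht a b x hx
  set v : ℝ → ℝ := fun z => u₀ (sqrt t * z)
  have hv : Measurable v := hmeas.comp (measurable_const_mul _)
  have hFpos : F x = 1 / (2 * sqrt π) * ∫ z in Ioi 0, exp (-(z - x) ^ 2 / 4) := by
    rw [hF, integral_Iio_eq_integral_Ioi_sub]
    simp_rw [sub_sq_comm x]
  have hFneg : F (-x) = 1 / (2 * sqrt π) * ∫ z in Ioi 0, exp (-(-z - x) ^ 2 / 4) := by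
    rw [hF, integral_Iio_eq_integral_Ioi_sub]
    simp_rw [neg_sub_comm x]
  have hρ_env : ρ L = fun z => ⨆ w : Icc (-L) L, exp (-(z - w) ^ 2 / 4) := funext (hρ L)
  have hρ_int : IntegrableOn (fun z => ρ L z * (|v (-z) - a| + |v z - b|)) (Ioi 0) := by
    rw [hρ_env]
    refine ((integrable_ciSup_Icc_exp_neg_sq_sub (by linarith)).mul_bdd (c := 2 * C + |a| + |b|)
      (by fun_prop) (Eventually.of_forall fun z => ?_)).integrableOn
    rw [norm_of_nonneg (by positivity)]
    linarith [abs_sub (v (-z)) a, abs_sub (v z) b, hbd (sqrt t * -z), hbd (sqrt t * z)]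
  have hkρ : ∀ z > 0, |exp (-(-z - x) ^ 2 / 4)| ≤ ρ L z ∧ |exp (-(z - x) ^ 2 / 4)| ≤ ρ L z := by
    intro z _
    simp only [abs_exp, hρ_env]
    refine ⟨?_, exp_neg_sq_sub_le_ciSup hx⟩
    rw [show -z - x = -(z - -x) by ring, neg_sq]
    exact exp_neg_sq_sub_le_ciSup ⟨by linarith [hx.2], by linarith [hx.1]⟩
  have key := abs_integral_sub_le_integral_Ioi a b (integrable_exp_neg_sq_sub x)
    ((integrable_exp_neg_sq_sub x).mul_bdd hv.aestronglyMeasurable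
      (Eventually.of_forall fun z => (hbd _))) hkρ hρ_int
  simp only [v, mul_neg, ← neg_mul] at key
  rw [hu _ _ ht, heat_integral_rescale ht, hFpos, hFneg, mul_left_comm a, mul_left_comm b,
    ← mul_add, ← mul_sub, abs_mul, abs_of_pos (by positivity)]
  exact mul_le_mul_of_nonneg_left key (by positivity)
end

section
/- Let u₀ ∈ L^∞(ℝ) be C¹ on ℝ \ {0} with lim_{|x|→∞} |x·u₀'(x)| = 0, and let u(x,t) be the heat-kernel convolution solution of u_t = u_xx with initial value u₀. Then for every L > 0, lim_{t→∞} sup_{x∈[−L,L]} |u(√t·x, t) − (F(−x)·u₀(−√t) + F(x)·u₀(√t))| = 0, where F(z) = (1/(2√π)) ∫_{−∞}^z e^{−y²/4} dy. -/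
open Filter Real MeasureTheory Set Topology

/-!
With `s = √t` and the substitution `y = s z`, `u(s x, t)` becomes the Gaussian average
`(1/(2√π)) ∫ exp(-(x - z)²/4) u₀(s z) dz`, and `F(-x) u₀(-s) + F(x) u₀(s)` is the same average of
the step function equal to `u₀(-s)` for `z < 0` and to `u₀(s)` for `z ≥ 0`. The hypothesis
`x u₀'(x) → 0` says that `w ↦ u₀(±exp w)` has derivative tending to `0`, so `u₀(s z) - u₀(±s) → 0`
for every fixed `z ≠ 0`: `u₀` is slowly varying at `±∞`. For `|x| ≤ L` all kernels
`exp(-(x - z)²/4)` lie below the integrable `exp(L²/4 - z²/8)`, so dominated convergence gives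
the limit uniformly in `x`.
-/

theorem tendsto_sub_comp_add_of_tendsto_deriv {f f' : ℝ → ℝ} (hf : ∀ x, HasDerivAt f (f' x) x)
    (hf' : Tendsto f' atTop (𝓝 0)) (c : ℝ) :
    Tendsto (fun x => f (x + c) - f x) atTop (𝓝 0) := by
  rw [Metric.tendsto_atTop] at hf' ⊢
  intro ε hε
  obtain ⟨N, hN⟩ := hf' (ε / (|c| + 1)) (by positivity)
  refine ⟨N + |c|, fun x hx => ?_⟩
  have hmvt := (convex_Ici N).norm_image_sub_le_of_norm_hasDerivWithin_le (x := x) (y := x + c)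
    (fun y _ => (hf y).hasDerivWithinAt) (fun y hy => by simpa using (hN y hy).le)
    (mem_Ici.mpr (by linarith [abs_nonneg c])) (mem_Ici.mpr (by linarith [neg_abs_le c]))
  rw [dist_zero_right]
  calc ‖f (x + c) - f x‖ ≤ ε / (|c| + 1) * |c| := by simpa using hmvt
    _ < ε := by
      rw [div_mul_eq_mul_div, div_lt_iff₀ (by positivity)]
      nlinarith [abs_nonneg c]

theorem tendsto_comp_mul_sub_of_tendsto_mul_deriv {g : ℝ → ℝ} (hg : DifferentiableOn ℝ g (Ioi 0))
    (hg' : Tendsto (fun y => y * deriv g y) atTop (𝓝 0)) {z : ℝ} (hz : 0 < z) :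
    Tendsto (fun s => g (s * z) - g s) atTop (𝓝 0) := by
  have hderiv (w : ℝ) : HasDerivAt (fun w => g (exp w)) (exp w * deriv g (exp w)) w := by
    rw [mul_comm]
    exact (hg.differentiableAt (Ioi_mem_nhds (exp_pos w))).hasDerivAt.comp w (hasDerivAt_exp w)
  refine ((tendsto_sub_comp_add_of_tendsto_deriv hderiv (hg'.comp tendsto_exp_atTop)
    (log z)).comp tendsto_log_atTop).congr' ?_
  filter_upwards [eventually_gt_atTop 0] with s hs
  simp [exp_add, exp_log hs, exp_log hz]

noncomputable def stepError (u₀ : ℝ → ℝ) (s z : ℝ) : ℝ :=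
  u₀ (s * z) - if z < 0 then u₀ (-s) else u₀ s

section stepError

variable {u₀ : ℝ → ℝ}

theorem measurable_stepError (hmeas : Measurable u₀) (s : ℝ) : Measurable (stepError u₀ s) :=
  (hmeas.comp (measurable_const_mul s)).sub
    (Measurable.ite measurableSet_Iio measurable_const measurable_const)

theorem abs_stepError_le {C : ℝ} (hbd : ∀ x, |u₀ x| ≤ C) (s z : ℝ) :
    |stepError u₀ s z| ≤ 2 * C := by
  have hstep : |if z < 0 then u₀ (-s) else u₀ s| ≤ C := by split_ifs <;> apply hbd
  rw [stepError]
  linarith [abs_sub (u₀ (s * z)) (if z < 0 then u₀ (-s) else u₀ s), hbd (s * z)]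

theorem tendsto_stepError (hdiff : DifferentiableOn ℝ u₀ {0}ᶜ)
    (hlim : Tendsto (fun x => x * deriv u₀ x) (cocompact ℝ) (𝓝 0)) {z : ℝ} (hz : z ≠ 0) :
    Tendsto (fun s => stepError u₀ s z) atTop (𝓝 0) := by
  rcases hz.lt_or_gt with hz | hz
  · have hneg : Tendsto (fun s => u₀ (-(s * -z)) - u₀ (-s)) atTop (𝓝 0) := by
      refine tendsto_comp_mul_sub_of_tendsto_mul_deriv (g := fun y => u₀ (-y))
        (hdiff.comp (differentiableOn_neg _) fun y hy => ?_) ?_ (neg_pos.mpr hz)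
      · simpa using (mem_Ioi.mp hy).ne'
      · refine ((hlim.mono_left atBot_le_cocompact).comp tendsto_neg_atTop_atBot).congr fun y => ?_
        simp [deriv_comp_neg]
    refine hneg.congr fun s => ?_
    simp [stepError, hz]
  · refine (tendsto_comp_mul_sub_of_tendsto_mul_deriv (hdiff.mono fun y hy => ?_)
      (hlim.mono_left atTop_le_cocompact) hz).congr fun s => ?_
    · simpa using (mem_Ioi.mp hy).ne'
    · simp [stepError, hz.not_gt]

theorem tendsto_integral_mul_abs_stepError (hmeas : Measurable u₀) {C : ℝ}
    (hbd : ∀ x, |u₀ x| ≤ C) (hdiff : DifferentiableOn ℝ u₀ {0}ᶜ)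
    (hlim : Tendsto (fun x => x * deriv u₀ x) (cocompact ℝ) (𝓝 0)) {H : ℝ → ℝ}
    (hH : Integrable H) :
    Tendsto (fun s => ∫ z, H z * |stepError u₀ s z|) atTop (𝓝 0) := by
  have hdom := tendsto_integral_filter_of_dominated_convergence (l := atTop)
    (F := fun s z => H z * |stepError u₀ s z|) (fun z => 2 * C * |H z|)
    (Eventually.of_forall fun s =>
      hH.aestronglyMeasurable.mul (measurable_stepError hmeas s).abs.aestronglyMeasurable)
    (Eventually.of_forall fun s => ae_of_all _ fun z => by
      rw [norm_mul, Real.norm_eq_abs, Real.norm_eq_abs, abs_abs, mul_comm]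
      exact mul_le_mul_of_nonneg_right (abs_stepError_le hbd s z) (abs_nonneg _))
    (hH.abs.const_mul _) (f := fun _ => 0) ?_
  · simpa using hdom
  filter_upwards [Measure.ae_ne volume 0] with z hz
  simpa using ((tendsto_stepError hdiff hlim hz).abs.const_mul (H z))

end stepError

theorem integrable_exp_neg_sub_sq_div_four (x : ℝ) :
    Integrable (fun z => exp (-(x - z) ^ 2 / 4)) := by
  refine ((integrable_exp_neg_mul_sq (b := 1 / 4) (by norm_num)).comp_sub_left x).congr
    (ae_of_all _ fun z => ?_)
  simp only
  ring_nf

theorem integrable_exp_neg_sub_sq_div_four_mul (x : ℝ) {g : ℝ → ℝ} (hg : AEStronglyMeasurable g)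
    {M : ℝ} (hM : ∀ z, |g z| ≤ M) : Integrable (fun z => exp (-(x - z) ^ 2 / 4) * g z) :=
  (integrable_exp_neg_sub_sq_div_four x).mul_bdd hg (ae_of_all _ hM)

theorem integrable_exp_sub_sq_div_eight (a : ℝ) : Integrable (fun z => exp (a - z ^ 2 / 8)) := by
  refine ((integrable_exp_neg_mul_sq (b := 1 / 8) (by norm_num)).const_mul (exp a)).congr
    (ae_of_all _ fun z => ?_)
  simp only [← exp_add]
  ring_nf

theorem exp_neg_sub_sq_div_four_le {x L : ℝ} (hx : |x| ≤ L) (z : ℝ) :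
    exp (-(x - z) ^ 2 / 4) ≤ exp (L ^ 2 / 4 - z ^ 2 / 8) := by
  have hxL : x ^ 2 ≤ L ^ 2 := by nlinarith [sq_abs x, abs_nonneg x]
  exact exp_le_exp.mpr (by nlinarith [sq_nonneg (2 * x - z)])

theorem abs_integral_exp_neg_sub_sq_div_four_mul_le {x L : ℝ} (hx : |x| ≤ L) {f : ℝ → ℝ}
    (hf : Integrable (fun z => exp (L ^ 2 / 4 - z ^ 2 / 8) * |f z|)) :
    |∫ z, exp (-(x - z) ^ 2 / 4) * f z| ≤ ∫ z, exp (L ^ 2 / 4 - z ^ 2 / 8) * |f z| :=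
  norm_integral_le_of_norm_le (f := fun z => exp (-(x - z) ^ 2 / 4) * f z) hf
    (ae_of_all _ fun z => by
      rw [norm_mul, Real.norm_eq_abs, Real.norm_eq_abs, abs_of_pos (exp_pos _)]
      exact mul_le_mul_of_nonneg_right (exp_neg_sub_sq_div_four_le hx z) (abs_nonneg _))

theorem setIntegral_Iio_zero_exp_neg_sub_sq_div_four (x : ℝ) :
    ∫ z in Iio 0, exp (-(x - z) ^ 2 / 4) = ∫ y in Iio (-x), exp (-y ^ 2 / 4) := by
  have h := (measurePreserving_sub_right volume x).setIntegral_preimage_emb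
    (measurableEmbedding_subRight x) (fun y => exp (-y ^ 2 / 4)) (Iio (-x))
  rw [preimage_sub_const_Iio, neg_add_cancel] at h
  rw [← h]
  congr with z
  ring_nf

theorem setIntegral_Ici_zero_exp_neg_sub_sq_div_four (x : ℝ) :
    ∫ z in Ici 0, exp (-(x - z) ^ 2 / 4) = ∫ y in Iio x, exp (-y ^ 2 / 4) := by
  have h := (Measure.measurePreserving_sub_left volume x).setIntegral_preimage_emb
    (measurableEmbedding_subLeft x) (fun y => exp (-y ^ 2 / 4)) (Iio x)
  rw [preimage_const_sub_Iio, sub_self] at h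
  rw [integral_Ici_eq_integral_Ioi, ← h]

theorem integral_exp_neg_sub_sq_div_four_mul_step (x a b : ℝ) :
    ∫ z, exp (-(x - z) ^ 2 / 4) * (if z < 0 then a else b)
      = (∫ y in Iio (-x), exp (-y ^ 2 / 4)) * a + (∫ y in Iio x, exp (-y ^ 2 / 4)) * b := by
  have hint := integrable_exp_neg_sub_sq_div_four_mul x (g := fun z => if z < 0 then a else b)
    (Measurable.ite measurableSet_Iio measurable_const measurable_const).aestronglyMeasurable
    (M := max |a| |b|) fun z => by split_ifs <;> simp
  rw [← integral_add_compl measurableSet_Iio hint, compl_Iio,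
    ← setIntegral_Iio_zero_exp_neg_sub_sq_div_four, ← setIntegral_Ici_zero_exp_neg_sub_sq_div_four,
    ← integral_mul_const, ← integral_mul_const]
  congr 1
  · exact setIntegral_congr_fun measurableSet_Iio fun z hz => by simp [mem_Iio.mp hz]
  · exact setIntegral_congr_fun measurableSet_Ici fun z hz => by simp [not_lt.mpr (mem_Ici.mp hz)]

theorem integral_exp_neg_sub_sq_div_four_mul_stepError {u₀ : ℝ → ℝ} (hmeas : Measurable u₀)
    {C : ℝ} (hbd : ∀ x, |u₀ x| ≤ C) (x s : ℝ) :
    ∫ z, exp (-(x - z) ^ 2 / 4) * stepError u₀ s z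
      = (∫ z, exp (-(x - z) ^ 2 / 4) * u₀ (s * z)) -
          ((∫ y in Iio (-x), exp (-y ^ 2 / 4)) * u₀ (-s) +
            (∫ y in Iio x, exp (-y ^ 2 / 4)) * u₀ s) := by
  rw [← integral_exp_neg_sub_sq_div_four_mul_step, ← integral_sub]
  · simp only [stepError, mul_sub]
  · exact integrable_exp_neg_sub_sq_div_four_mul x
      (hmeas.comp (measurable_const_mul s)).aestronglyMeasurable fun z => hbd (s * z)
  · exact integrable_exp_neg_sub_sq_div_four_mul x
      (Measurable.ite measurableSet_Iio measurable_const measurable_const).aestronglyMeasurable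
      (M := C) fun z => by split_ifs <;> apply hbd

theorem heat_integral_eq_rescaled (g : ℝ → ℝ) {t : ℝ} (ht : 0 < t) (x : ℝ) :
    1 / (2 * √(π * t)) * ∫ y, exp (-(√t * x - y) ^ 2 / (4 * t)) * g y
      = 1 / (2 * √π) * ∫ z, exp (-(x - z) ^ 2 / 4) * g (√t * z) := by
  have hs : 0 < √t := sqrt_pos.mpr ht
  have hsub :=
    Measure.integral_comp_mul_left (fun y => exp (-(√t * x - y) ^ 2 / (4 * t)) * g y) √t
  have hkernel (z : ℝ) : exp (-(√t * x - √t * z) ^ 2 / (4 * t)) = exp (-(x - z) ^ 2 / 4) := by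
    rw [← mul_sub, mul_pow, sq_sqrt ht.le]
    field_simp
  simp only [hkernel, abs_inv, abs_of_pos hs, smul_eq_mul] at hsub
  rw [hsub, sqrt_mul pi_pos.le]
  field_simp

theorem stmt_6 (u₀ : ℝ → ℝ) (hmeas : Measurable u₀) (C : ℝ) (hbd : ∀ x, |u₀ x| ≤ C)
    (hC1 : ContDiffOn ℝ 1 u₀ {(0:ℝ)}ᶜ)
    (hosc : Tendsto (fun x => |x * deriv u₀ x|) (cocompact ℝ) (nhds 0))
    (u : ℝ → ℝ → ℝ)
    (hu : ∀ x t, 0 < t →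
      u x t = (1 / (2 * Real.sqrt (π * t))) * ∫ y : ℝ, Real.exp (-(x - y)^2 / (4 * t)) * u₀ y)
    (F : ℝ → ℝ) (hF : ∀ z, F z = (1 / (2 * Real.sqrt π)) * ∫ y in Iio z, Real.exp (-y^2 / 4)) :
    ∀ L > 0,
      Tendsto
        (fun t => ⨆ x : Icc (-L) L,
          |u (Real.sqrt t * (x : ℝ)) t -
            (F (-(x : ℝ)) * u₀ (-(Real.sqrt t)) + F (x : ℝ) * u₀ (Real.sqrt t))|)
        atTop (nhds 0) := by
  intro L _
  set H : ℝ → ℝ := fun z => exp ((L : ℝ) ^ 2 / 4 - z ^ 2 / 8)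
  have hH : Integrable H := integrable_exp_sub_sq_div_eight _
  have hHΔ (s : ℝ) : Integrable (fun z => H z * |stepError u₀ s z|) :=
    hH.mul_bdd (measurable_stepError hmeas s).abs.aestronglyMeasurable
      (ae_of_all _ fun z => by simpa using abs_stepError_le hbd s z)
  have hlim := ((tendsto_integral_mul_abs_stepError hmeas hbd (hC1.differentiableOn one_ne_zero)
    ((tendsto_zero_iff_abs_tendsto_zero _).mpr hosc) hH).comp tendsto_sqrt_atTop).const_mul
    (1 / (2 * √π))
  rw [mul_zero] at hlim
  refine squeeze_zero' (Eventually.of_forall fun t => iSup_nonneg fun x => abs_nonneg _) ?_ hlim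
  filter_upwards [eventually_gt_atTop 0] with t ht
  refine Real.iSup_le (fun x => ?_) (mul_nonneg (by positivity)
    (integral_nonneg fun z => mul_nonneg (exp_pos _).le (abs_nonneg _)))
  have hx : |(x : ℝ)| ≤ L := abs_le.mpr ⟨by exact_mod_cast x.2.1, by exact_mod_cast x.2.2⟩
  calc _ = |1 / (2 * √π) * ∫ z, exp (-(x - z) ^ 2 / 4) * stepError u₀ √t z| := by
        rw [hu _ _ ht, hF, hF, heat_integral_eq_rescaled _ ht,
          integral_exp_neg_sub_sq_div_four_mul_stepError hmeas hbd]
        congr 1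
        ring
    _ = 1 / (2 * √π) * |∫ z, exp (-(x - z) ^ 2 / 4) * stepError u₀ √t z| := by
        rw [abs_mul, abs_of_pos (by positivity)]
    _ ≤ 1 / (2 * √π) * ∫ z, H z * |stepError u₀ √t z| := by
        gcongr
        exact abs_integral_exp_neg_sub_sq_div_four_mul_le hx (hHΔ _)
end

section
/- Let u₀ ∈ L^∞(ℝ) be C¹ on ℝ \ {0} with lim_{|x|→0} |x·u₀'(x)| = 0, and let u(x,t) be the heat-kernel convolution solution of u_t = u_xx with initial value u₀. Then for every L > 0, lim_{t→0⁺} sup_{x∈[−L,L]} |u(√t·x, t) − (F(−x)·u₀(−√t) + F(x)·u₀(√t))| = 0, where F(z) = (1/(2√π)) ∫_{−∞}^z e^{−y²/4} dy. -/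
open Filter Real MeasureTheory Set Topology

/-!
After the substitution `y = √t z`, the error `u (√t x) t - (F (-x) u₀ (-√t) + F x u₀ √t)` becomes
`(2√π)⁻¹ ∫ e^{-(x-z)²/4} (u₀ (√t z) - u₀ (±√t)) dz`, the sign being that of `z`. By the mean value
theorem, `|u₀ (s z) - u₀ (s σ)|` (with `σ z > 0`) is at most a constant depending only on `σ, z`
times the supremum of `|w u₀' w|` for `w` between `s σ` and `s z`, so the integrand tends to `0`
pointwise as `s → 0⁺`. For `|x| ≤ L` the kernel is dominated by `e^{L²/4} e^{-z²/8}`, and dominated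
convergence gives the limit uniformly in `x`.
-/

lemma min_abs_le_abs_of_mem_uIcc {a b w : ℝ} (hab : 0 < a * b) (hw : w ∈ uIcc a b) :
    min |a| |b| ≤ |w| := by
  rw [mem_uIcc] at hw
  rcases pos_and_pos_or_neg_and_neg_of_mul_pos hab with ⟨ha, hb⟩ | ⟨ha, hb⟩
  · rcases hw with ⟨haw, -⟩ | ⟨hbw, -⟩
    · rw [abs_of_pos ha, abs_of_pos (ha.trans_le haw)]; exact min_le_of_left_le haw
    · rw [abs_of_pos hb, abs_of_pos (hb.trans_le hbw)]; exact min_le_of_right_le hbw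
  · rcases hw with ⟨-, hwb⟩ | ⟨-, hwa⟩
    · rw [abs_of_neg hb, abs_of_neg (hwb.trans_lt hb)]; exact min_le_of_right_le (by linarith)
    · rw [abs_of_neg ha, abs_of_neg (hwa.trans_lt ha)]; exact min_le_of_left_le (by linarith)

lemma abs_le_abs_add_abs_of_mem_uIcc {a b w : ℝ} (hw : w ∈ uIcc a b) : |w| ≤ |a| + |b| := by
  rw [mem_uIcc] at hw
  rcases hw with ⟨h1, h2⟩ | ⟨h1, h2⟩ <;> rw [abs_le] <;> constructor <;>
    linarith [le_abs_self a, le_abs_self b, neg_abs_le a, neg_abs_le b]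

lemma min_abs_pos_of_mul_pos {a b : ℝ} (hab : 0 < a * b) : 0 < min |a| |b| :=
  lt_min (abs_pos.2 (left_ne_zero_of_mul hab.ne')) (abs_pos.2 (right_ne_zero_of_mul hab.ne'))

lemma uIcc_subset_compl_zero {a b : ℝ} (hab : 0 < a * b) : uIcc a b ⊆ {0}ᶜ := fun _ hw =>
  abs_pos.1 <| (min_abs_pos_of_mul_pos hab).trans_le (min_abs_le_abs_of_mem_uIcc hab hw)

lemma abs_sub_le_of_abs_mul_deriv_le {f : ℝ → ℝ} {a b ε : ℝ} (hab : 0 < a * b)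
    (hf : ∀ w ∈ uIcc a b, DifferentiableAt ℝ f w) (hε : ∀ w ∈ uIcc a b, |w * deriv f w| ≤ ε) :
    |f b - f a| ≤ ε / min |a| |b| * |b - a| := by
  have hmin := min_abs_pos_of_mul_pos hab
  refine (convex_uIcc a b).norm_image_sub_le_of_norm_deriv_le hf (fun w hw => ?_)
    left_mem_uIcc right_mem_uIcc
  have hwmin := min_abs_le_abs_of_mem_uIcc hab hw
  calc ‖deriv f w‖ = |w * deriv f w| / |w| := by
        rw [abs_mul, mul_div_cancel_left₀ _ (hmin.trans_le hwmin).ne', Real.norm_eq_abs]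
    _ ≤ ε / min |a| |b| :=
        div_le_div₀ ((abs_nonneg _).trans (hε w hw)) (hε w hw) hmin hwmin

lemma tendsto_sub_comp_mul_nhdsGT {f : ℝ → ℝ} (hf : DifferentiableOn ℝ f {0}ᶜ)
    (hosc : Tendsto (fun x => |x * deriv f x|) (𝓝[≠] 0) (𝓝 0)) {σ z : ℝ} (hσz : 0 < σ * z) :
    Tendsto (fun s => f (s * z) - f (s * σ)) (𝓝[>] 0) (𝓝 0) := by
  set c := |z - σ| / min |σ| |z|
  have hc : 0 ≤ c := by positivity
  rw [Metric.tendsto_nhdsWithin_nhds]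
  intro η hη
  obtain ⟨δ, hδ, hδosc⟩ := Metric.tendsto_nhdsWithin_nhds.1 hosc (η / (c + 1)) (by positivity)
  have hσz' : 0 < |σ| + |z| :=
    add_pos_of_pos_of_nonneg (abs_pos.2 (left_ne_zero_of_mul hσz.ne')) (abs_nonneg z)
  refine ⟨δ / (|σ| + |z|), by positivity, fun s (hs : 0 < s) hsδ => ?_⟩
  rw [Real.dist_0_eq_abs, abs_of_pos hs, lt_div_iff₀ hσz'] at hsδ
  have hsσz : 0 < s * σ * (s * z) := by nlinarith [mul_pos hs hs]
  have hsmall : ∀ w ∈ uIcc (s * σ) (s * z), |w * deriv f w| ≤ η / (c + 1) := by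
    intro w hw
    have hwδ : dist w 0 < δ := by
      rw [Real.dist_0_eq_abs]
      calc |w| ≤ |s * σ| + |s * z| := abs_le_abs_add_abs_of_mem_uIcc hw
        _ = s * (|σ| + |z|) := by rw [abs_mul, abs_mul, abs_of_pos hs]; ring
        _ < δ := hsδ
    simpa using (hδosc (uIcc_subset_compl_zero hsσz hw) hwδ).le
  have hdiff : ∀ w ∈ uIcc (s * σ) (s * z), DifferentiableAt ℝ f w := fun w hw =>
    hf.differentiableAt (isOpen_compl_singleton.mem_nhds (uIcc_subset_compl_zero hsσz hw))
  rw [Real.dist_0_eq_abs]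
  calc |f (s * z) - f (s * σ)| ≤ η / (c + 1) / min |s * σ| |s * z| * |s * z - s * σ| :=
        abs_sub_le_of_abs_mul_deriv_le hsσz hdiff hsmall
    _ = η / (c + 1) * c := by
        rw [abs_mul, abs_mul, ← mul_sub, abs_mul, abs_of_pos hs, ← mul_min_of_nonneg _ _ hs.le]
        field_simp
        rfl
    _ < η := by
        rw [div_mul_eq_mul_div, div_lt_iff₀ (by positivity)]; nlinarith

noncomputable def jumpDefect (u₀ : ℝ → ℝ) (s z : ℝ) : ℝ :=
  u₀ (s * z) - if z < 0 then u₀ (-s) else u₀ s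

lemma measurable_jumpDefect {u₀ : ℝ → ℝ} (hu₀ : Measurable u₀) (s : ℝ) :
    Measurable (jumpDefect u₀ s) :=
  (hu₀.comp (measurable_const_mul s)).sub
    (Measurable.ite measurableSet_Iio measurable_const measurable_const)

lemma abs_jumpDefect_le {u₀ : ℝ → ℝ} {C : ℝ} (hC : ∀ x, |u₀ x| ≤ C) (s z : ℝ) :
    |jumpDefect u₀ s z| ≤ 2 * C := by
  unfold jumpDefect
  split_ifs <;> linarith [abs_sub (u₀ (s * z)) (u₀ (-s)), abs_sub (u₀ (s * z)) (u₀ s),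
    hC (s * z), hC (-s), hC s]

lemma tendsto_jumpDefect {u₀ : ℝ → ℝ} (hu₀ : DifferentiableOn ℝ u₀ {0}ᶜ)
    (hosc : Tendsto (fun x => |x * deriv u₀ x|) (𝓝[≠] 0) (𝓝 0)) {z : ℝ} (hz : z ≠ 0) :
    Tendsto (fun s => jumpDefect u₀ s z) (𝓝[>] 0) (𝓝 0) := by
  unfold jumpDefect
  rcases hz.lt_or_gt with hz | hz
  · simpa [hz] using tendsto_sub_comp_mul_nhdsGT hu₀ hosc (σ := -1) (by linarith)
  · simpa [hz.not_gt] using tendsto_sub_comp_mul_nhdsGT hu₀ hosc (σ := 1) (by linarith)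

lemma tendsto_integral_mul_abs_jumpDefect {u₀ : ℝ → ℝ} {C : ℝ} (hmeas : Measurable u₀)
    (hC : ∀ x, |u₀ x| ≤ C) (hdiff : DifferentiableOn ℝ u₀ {0}ᶜ)
    (hosc : Tendsto (fun x => |x * deriv u₀ x|) (𝓝[≠] 0) (𝓝 0)) {g : ℝ → ℝ} (hg : Integrable g) :
    Tendsto (fun s => ∫ z, g z * |jumpDefect u₀ s z|) (𝓝[>] 0) (𝓝 0) := by
  have h := tendsto_integral_filter_of_dominated_convergence (fun z => |g z| * (2 * C))
    (F := fun s z => g z * |jumpDefect u₀ s z|) (f := fun _ => 0)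
    (Eventually.of_forall fun s => hg.aestronglyMeasurable.mul
      (measurable_jumpDefect hmeas s).abs.aestronglyMeasurable)
    (Eventually.of_forall fun s => Eventually.of_forall fun z => by
      rw [Real.norm_eq_abs, abs_mul, abs_abs]
      exact mul_le_mul_of_nonneg_left (abs_jumpDefect_le hC s z) (abs_nonneg _))
    (hg.abs.mul_const _)
    ((measure_eq_zero_iff_ae_notMem.1 (measure_singleton 0)).mono fun z hz => by
      simpa using (tendsto_jumpDefect hdiff hosc hz).abs.const_mul (g z))
  simpa using h

lemma integrable_exp_neg_sq_div {c : ℝ} (hc : 0 < c) :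
    Integrable (fun z => rexp (-z ^ 2 / c)) := by
  simpa [neg_div, div_eq_inv_mul] using integrable_exp_neg_mul_sq (inv_pos.2 hc)

lemma integrable_exp_neg_sub_sq (x : ℝ) : Integrable (fun z => rexp (-(x - z) ^ 2 / 4)) :=
  (integrable_exp_neg_sq_div (c := 4) (by norm_num)).comp_sub_left x

lemma integrable_exp_neg_sub_sq_mul {g : ℝ → ℝ} {C : ℝ} (hg : AEStronglyMeasurable g)
    (hC : ∀ z, |g z| ≤ C) (x : ℝ) : Integrable (fun z => rexp (-(x - z) ^ 2 / 4) * g z) := by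
  simpa only [mul_comm] using (integrable_exp_neg_sub_sq x).bdd_mul hg (Eventually.of_forall hC)

lemma exp_neg_sub_sq_le (x z : ℝ) :
    rexp (-(x - z) ^ 2 / 4) ≤ rexp (x ^ 2 / 4) * rexp (-z ^ 2 / 8) := by
  rw [← Real.exp_add, Real.exp_le_exp]
  nlinarith [sq_nonneg (2 * x - z)]

lemma abs_integral_exp_neg_sub_sq_mul_le {g : ℝ → ℝ} {C : ℝ} (hg : AEStronglyMeasurable g)
    (hC : ∀ z, |g z| ≤ C) (x : ℝ) :
    |∫ z, rexp (-(x - z) ^ 2 / 4) * g z| ≤ rexp (x ^ 2 / 4) * ∫ z, rexp (-z ^ 2 / 8) * |g z| := by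
  have hint : Integrable (fun z => rexp (-z ^ 2 / 8) * |g z|) := by
    simpa only [mul_comm, Real.norm_eq_abs] using (integrable_exp_neg_sq_div (by norm_num)).bdd_mul
      hg.norm (Eventually.of_forall fun z => (abs_abs (g z)).le.trans (hC z))
  rw [← integral_const_mul, ← Real.norm_eq_abs]
  refine norm_integral_le_of_norm_le (hint.const_mul _) (Eventually.of_forall fun z => ?_)
  rw [norm_mul, Real.norm_eq_abs, Real.norm_eq_abs, abs_of_pos (Real.exp_pos _), ← mul_assoc]
  exact mul_le_mul_of_nonneg_right (exp_neg_sub_sq_le x z) (abs_nonneg _)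

lemma setIntegral_Ioi_exp_neg_sub_sq (x : ℝ) :
    ∫ z in Ioi 0, rexp (-(x - z) ^ 2 / 4) = ∫ y in Iio x, rexp (-y ^ 2 / 4) := by
  have h := (Measure.measurePreserving_sub_left volume x).setIntegral_preimage_emb
    (measurableEmbedding_subLeft x) (fun y => rexp (-y ^ 2 / 4)) (Iio x)
  have hpre : (fun z => x - z) ⁻¹' Iio x = Ioi 0 := by ext z; simp
  rwa [hpre] at h

lemma setIntegral_Iio_exp_neg_sub_sq (x : ℝ) :
    ∫ z in Iio 0, rexp (-(x - z) ^ 2 / 4) = ∫ y in Iio (-x), rexp (-y ^ 2 / 4) := by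
  have h := (measurePreserving_sub_right volume x).setIntegral_preimage_emb
    (measurableEmbedding_subRight x) (fun y => rexp (-y ^ 2 / 4)) (Iio (-x))
  have hpre : (fun z => z - x) ⁻¹' Iio (-x) = Iio 0 := by ext z; simp
  rw [hpre] at h
  convert h using 4 with z
  ring

lemma integral_exp_neg_sub_sq_mul_ite (x a b : ℝ) :
    ∫ z, rexp (-(x - z) ^ 2 / 4) * (if z < 0 then a else b)
      = (∫ y in Iio (-x), rexp (-y ^ 2 / 4)) * a + (∫ y in Iio x, rexp (-y ^ 2 / 4)) * b := by
  have hint := integrable_exp_neg_sub_sq_mul (g := fun z => if z < 0 then a else b)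
    (C := max |a| |b|)
    (Measurable.ite measurableSet_Iio measurable_const measurable_const).aestronglyMeasurable
    (fun z => by split_ifs; exacts [le_max_left _ _, le_max_right _ _]) x
  rw [← setIntegral_Iio_exp_neg_sub_sq, ← setIntegral_Ioi_exp_neg_sub_sq,
    ← integral_add_compl measurableSet_Iio hint, compl_Iio, integral_Ici_eq_integral_Ioi,
    ← integral_mul_const, ← integral_mul_const]
  congr 1
  · exact setIntegral_congr_fun measurableSet_Iio fun z hz => by simp [mem_Iio.1 hz]
  · exact setIntegral_congr_fun measurableSet_Ioi fun z hz => by simp [(mem_Ioi.1 hz).le.not_gt]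

lemma heat_integral_comp_sqrt (u₀ : ℝ → ℝ) {t : ℝ} (ht : 0 < t) (x : ℝ) :
    1 / (2 * √(π * t)) * ∫ y, rexp (-(√t * x - y) ^ 2 / (4 * t)) * u₀ y
      = (2 * √π)⁻¹ * ∫ z, rexp (-(x - z) ^ 2 / 4) * u₀ (√t * z) := by
  have hs : 0 < √t := Real.sqrt_pos.2 ht
  have hts : 4 * t = 4 * √t ^ 2 := by rw [Real.sq_sqrt ht.le]
  have hcomp := Measure.integral_comp_mul_left
    (fun y => rexp (-(√t * x - y) ^ 2 / (4 * t)) * u₀ y) (√t)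
  have hexp : ∀ z, -(√t * x - √t * z) ^ 2 / (4 * t) = -(x - z) ^ 2 / 4 := fun z => by
    rw [hts]; field_simp
  simp only [hexp, smul_eq_mul, abs_of_pos (inv_pos.2 hs)] at hcomp
  rw [hcomp, Real.sqrt_mul Real.pi_pos.le]
  field_simp

lemma integral_exp_neg_sub_sq_mul_jumpDefect {u₀ : ℝ → ℝ} {C : ℝ} (hmeas : Measurable u₀)
    (hC : ∀ x, |u₀ x| ≤ C) (s x : ℝ) :
    ∫ z, rexp (-(x - z) ^ 2 / 4) * jumpDefect u₀ s z
      = (∫ z, rexp (-(x - z) ^ 2 / 4) * u₀ (s * z))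
        - ((∫ y in Iio (-x), rexp (-y ^ 2 / 4)) * u₀ (-s)
          + (∫ y in Iio x, rexp (-y ^ 2 / 4)) * u₀ s) := by
  rw [← integral_exp_neg_sub_sq_mul_ite, ← integral_sub]
  · simp only [jumpDefect, mul_sub]
  · exact integrable_exp_neg_sub_sq_mul (hmeas.comp (measurable_const_mul s)).aestronglyMeasurable
      (fun z => hC _) x
  · exact integrable_exp_neg_sub_sq_mul
      (Measurable.ite measurableSet_Iio measurable_const measurable_const).aestronglyMeasurable
      (fun z => by split_ifs <;> exact hC _) x

theorem stmt_7 (u₀ : ℝ → ℝ) (hmeas : Measurable u₀) (C : ℝ) (hbd : ∀ x, |u₀ x| ≤ C)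
    (hC1 : ContDiffOn ℝ 1 u₀ {(0:ℝ)}ᶜ)
    (hosc : Tendsto (fun x => |x * deriv u₀ x|) (nhdsWithin 0 {(0:ℝ)}ᶜ) (nhds 0))
    (u : ℝ → ℝ → ℝ)
    (hu : ∀ x t, 0 < t →
      u x t = (1 / (2 * Real.sqrt (π * t))) * ∫ y : ℝ, Real.exp (-(x - y)^2 / (4 * t)) * u₀ y)
    (F : ℝ → ℝ) (hF : ∀ z, F z = (1 / (2 * Real.sqrt π)) * ∫ y in Iio z, Real.exp (-y^2 / 4)) :
    ∀ L > 0,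
      Tendsto
        (fun t => ⨆ x : Icc (-L) L,
          |u (Real.sqrt t * (x : ℝ)) t -
            (F (-(x : ℝ)) * u₀ (-(Real.sqrt t)) + F (x : ℝ) * u₀ (Real.sqrt t))|)
        (nhdsWithin 0 (Ioi 0)) (nhds 0) := by
  intro L _
  have hrepr : ∀ t > 0, ∀ x : ℝ, u (√t * x) t - (F (-x) * u₀ (-√t) + F x * u₀ √t)
      = (2 * √π)⁻¹ * ∫ z, rexp (-(x - z) ^ 2 / 4) * jumpDefect u₀ √t z := by
    intro t ht x
    rw [hu _ _ ht, heat_integral_comp_sqrt u₀ ht, hF, hF,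
      integral_exp_neg_sub_sq_mul_jumpDefect hmeas hbd]
    ring
  have hB := (tendsto_integral_mul_abs_jumpDefect hmeas hbd (hC1.differentiableOn one_ne_zero)
    hosc (integrable_exp_neg_sq_div (c := 8) (by norm_num))).const_mul
    ((2 * √π)⁻¹ * rexp ((L : ℝ) ^ 2 / 4))
  rw [mul_zero] at hB
  have hsqrt : Tendsto (fun t => √t) (𝓝[>] 0) (𝓝[>] 0) :=
    tendsto_nhdsWithin_iff.2 ⟨(continuous_sqrt.tendsto' 0 0 sqrt_zero).mono_left nhdsWithin_le_nhds,
      eventually_nhdsWithin_of_forall fun _ => Real.sqrt_pos.2⟩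
  refine squeeze_zero' (Eventually.of_forall fun t => Real.iSup_nonneg fun _ => abs_nonneg _)
    (eventually_nhdsWithin_of_forall fun t (ht : 0 < t) => Real.iSup_le (fun x => ?_) ?_)
    (hB.comp hsqrt)
  · have hx : ((x : ℤ) : ℝ) ^ 2 ≤ (L : ℝ) ^ 2 := by exact_mod_cast sq_le_sq' x.2.1 x.2.2
    rw [hrepr t ht, abs_mul, abs_of_pos (by positivity : (0 : ℝ) < (2 * √π)⁻¹),
      Function.comp_apply, mul_assoc]
    gcongr
    refine (abs_integral_exp_neg_sub_sq_mul_le (measurable_jumpDefect hmeas _).aestronglyMeasurable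
      (abs_jumpDefect_le hbd _) _).trans ?_
    gcongr
  · exact mul_nonneg (by positivity) (integral_nonneg fun z => by positivity)
end

section
/- Let u₀ : ℝ → ℝ be C¹ on ℝ \ {0} with M₋ := sup_{y<0} |y·u₀'(y)| < ∞ and M₊ := sup_{y>0} |y·u₀'(y)| < ∞, and let u(x,t) be the heat-kernel convolution solution of u_t = u_xx with initial value u₀. Then for all x ∈ ℝ and t > 0: |u(√t·x, t) − (F(−x)·u₀(−√t) + F(x)·u₀(√t))| ≤ G(−x)·M₋ + G(x)·M₊, where F(z) = (1/(2√π)) ∫_{−∞}^z e^{−y²/4} dy and G(z) = (1/(2√π)) ∫_0^∞ e^{−(z−y)²/4} |log y| dy. -/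
/-!
Substituting `y = √t z` turns `u (√t x) t` into the average of `z ↦ u₀ (√t z)` against the
time-one heat kernel centred at `x`. On each half-line the bound `|y u₀' y| ≤ M` says that
`u₀ ∘ exp` is `M`-Lipschitz, so `|u₀ (√t z) - u₀ (±√t)| ≤ M |log |z||`. Integrating against the
kernel over the half-line, the constant `u₀ (±√t)` contributes `F (±x) u₀ (±√t)` and the error is
at most `M G (±x)`; the negative half-line is reduced to the positive one by reflecting `u₀`.
-/

open Filter Real MeasureTheory Set

noncomputable def heatKernel₁ (x z : ℝ) : ℝ := 1 / (2 * √π) * exp (-(x - z) ^ 2 / 4)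

lemma heatKernel₁_nonneg (x z : ℝ) : 0 ≤ heatKernel₁ x z := by
  unfold heatKernel₁; positivity

lemma heatKernel₁_neg_right (x z : ℝ) : heatKernel₁ x (-z) = heatKernel₁ (-x) z := by
  unfold heatKernel₁; ring_nf

lemma continuous_heatKernel₁ (x : ℝ) : Continuous (heatKernel₁ x) := by
  unfold heatKernel₁; fun_prop

lemma integrable_heatKernel₁ (x : ℝ) : Integrable (heatKernel₁ x) := by
  have h := ((integrable_exp_neg_mul_sq (b := 1 / 4) (by norm_num)).comp_sub_right x).const_mul
    (1 / (2 * √π))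
  refine h.congr (Eventually.of_forall fun z => ?_)
  simp only [heatKernel₁]
  ring_nf

lemma setIntegral_Ioi_heatKernel₁ (x : ℝ) :
    ∫ z in Ioi 0, heatKernel₁ x z = 1 / (2 * √π) * ∫ y in Iio x, exp (-y ^ 2 / 4) := by
  have h := (Measure.measurePreserving_sub_left volume x).setIntegral_preimage_emb
    (Homeomorph.subLeft x).measurableEmbedding (fun y => exp (-y ^ 2 / 4)) (Iio x)
  have hpre : (fun z => x - z) ⁻¹' Iio x = Ioi 0 := by ext z; simp
  rw [hpre] at h
  rw [← h, ← integral_const_mul]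
  rfl

lemma abs_log_le_two_mul_rpow_add {y : ℝ} (hy : 0 < y) :
    |log y| ≤ 2 * y ^ (1 / 2 : ℝ) + 2 * y ^ (-(1 / 2) : ℝ) := by
  have h₁ := log_le_sub_one_of_pos (rpow_pos_of_pos hy (1 / 2 : ℝ))
  have h₂ := log_le_sub_one_of_pos (rpow_pos_of_pos hy (-(1 / 2) : ℝ))
  rw [log_rpow hy] at h₁ h₂
  rw [abs_le]
  constructor <;> nlinarith [rpow_pos_of_pos hy (1 / 2 : ℝ), rpow_pos_of_pos hy (-(1 / 2) : ℝ)]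

lemma exp_neg_sq_sub_div_four_le (c y : ℝ) :
    exp (-(c - y) ^ 2 / 4) ≤ exp (c ^ 2 / 4) * exp (-(1 / 8) * y ^ 2) := by
  rw [← exp_add, exp_le_exp]
  nlinarith [sq_nonneg (y - 2 * c)]

lemma integrableOn_heatKernel₁_mul_abs_log (x : ℝ) :
    IntegrableOn (fun z => heatKernel₁ x z * |log z|) (Ioi 0) := by
  have hrpow (s : ℝ) (hs : -1 < s) :=
    integrableOn_rpow_mul_exp_neg_mul_sq (b := 1 / 8) (by norm_num) hs
  have hbound : IntegrableOn (fun z => 1 / (2 * √π) * exp (x ^ 2 / 4) *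
      (2 * (z ^ (1 / 2 : ℝ) * exp (-(1 / 8) * z ^ 2)) +
        2 * (z ^ (-(1 / 2) : ℝ) * exp (-(1 / 8) * z ^ 2)))) (Ioi 0) :=
    (((hrpow _ (by norm_num)).const_mul 2).add ((hrpow _ (by norm_num)).const_mul 2)).const_mul _
  refine hbound.mono' ?_ ?_
  · exact ((continuous_heatKernel₁ x).continuousOn.mul
      (continuousOn_log.mono fun z hz => ne_of_gt hz).abs).aestronglyMeasurable measurableSet_Ioi
  · filter_upwards [ae_restrict_mem measurableSet_Ioi] with z hz
    have hlog := abs_log_le_two_mul_rpow_add (y := z) hz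
    have hexp := exp_neg_sq_sub_div_four_le x z
    rw [Real.norm_eq_abs, abs_of_nonneg (mul_nonneg (heatKernel₁_nonneg x z) (abs_nonneg _)),
      heatKernel₁, mul_assoc, mul_assoc]
    refine mul_le_mul_of_nonneg_left ?_ (by positivity)
    calc exp (-(x - z) ^ 2 / 4) * |log z|
        ≤ exp (x ^ 2 / 4) * exp (-(1 / 8) * z ^ 2) *
            (2 * z ^ (1 / 2 : ℝ) + 2 * z ^ (-(1 / 2) : ℝ)) :=
          mul_le_mul hexp hlog (abs_nonneg _) (by positivity)
      _ = _ := by ring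

lemma abs_sub_le_mul_abs_log_of_abs_mul_deriv_le {f : ℝ → ℝ} {M : ℝ}
    (hf : ∀ y > 0, DifferentiableAt ℝ f y) (hM : ∀ y > 0, |y * deriv f y| ≤ M)
    {a z : ℝ} (ha : 0 < a) (hz : 0 < z) : |f (a * z) - f a| ≤ M * |log z| := by
  have hderiv (r : ℝ) : HasDerivAt (fun r => f (exp r)) (deriv f (exp r) * exp r) r :=
    (hf _ (exp_pos r)).hasDerivAt.comp r (hasDerivAt_exp r)
  have hbound (r : ℝ) (_ : r ∈ univ) : ‖deriv f (exp r) * exp r‖ ≤ M := by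
    rw [Real.norm_eq_abs, mul_comm]
    exact hM _ (exp_pos r)
  have h := convex_univ.norm_image_sub_le_of_norm_hasDerivWithin_le
    (fun r _ => (hderiv r).hasDerivWithinAt) hbound (mem_univ (log a)) (mem_univ (log (a * z)))
  rwa [exp_log (mul_pos ha hz), exp_log ha, log_mul ha.ne' hz.ne', add_sub_cancel_left,
    Real.norm_eq_abs, Real.norm_eq_abs] at h

section WeightedAverage

variable {α : Type*} [MeasurableSpace α] {μ : Measure α} {s : Set α} {w f b : α → ℝ} {c M : ℝ}

lemma ae_norm_mul_sub_le (hs : MeasurableSet s) (hw0 : ∀ z ∈ s, 0 ≤ w z)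
    (hfb : ∀ z ∈ s, |f z - c| ≤ M * b z) :
    ∀ᵐ z ∂μ.restrict s, ‖w z * (f z - c)‖ ≤ M * (w z * b z) := by
  filter_upwards [ae_restrict_mem hs] with z hz
  rw [norm_mul, Real.norm_eq_abs, Real.norm_eq_abs, abs_of_nonneg (hw0 z hz), mul_left_comm]
  exact mul_le_mul_of_nonneg_left (hfb z hz) (hw0 z hz)

lemma integrableOn_mul_of_abs_sub_le (hs : MeasurableSet s) (hw : IntegrableOn w s μ)
    (hw0 : ∀ z ∈ s, 0 ≤ w z) (hwb : IntegrableOn (fun z => w z * b z) s μ)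
    (hf : AEStronglyMeasurable f (μ.restrict s)) (hfb : ∀ z ∈ s, |f z - c| ≤ M * b z) :
    IntegrableOn (fun z => w z * f z) s μ := by
  have hdev : IntegrableOn (fun z => w z * (f z - c)) s μ :=
    (hwb.const_mul M).mono' (hw.aestronglyMeasurable.mul (hf.sub aestronglyMeasurable_const))
      (ae_norm_mul_sub_le hs hw0 hfb)
  refine (hdev.add (hw.mul_const c)).congr (Eventually.of_forall fun z => ?_)
  simp only [Pi.add_apply]
  ring

lemma abs_setIntegral_mul_sub_le (hs : MeasurableSet s) (hw : IntegrableOn w s μ)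
    (hw0 : ∀ z ∈ s, 0 ≤ w z) (hwb : IntegrableOn (fun z => w z * b z) s μ)
    (hf : AEStronglyMeasurable f (μ.restrict s)) (hfb : ∀ z ∈ s, |f z - c| ≤ M * b z) :
    |(∫ z in s, w z * f z ∂μ) - (∫ z in s, w z ∂μ) * c| ≤ M * ∫ z in s, w z * b z ∂μ := by
  rw [← integral_mul_const, ← integral_sub (integrableOn_mul_of_abs_sub_le hs hw hw0 hwb hf hfb)
    (hw.mul_const c), ← integral_const_mul]
  simp_rw [← mul_sub]
  exact norm_integral_le_of_norm_le (hwb.const_mul M) (ae_norm_mul_sub_le hs hw0 hfb)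

end WeightedAverage

lemma integral_eq_integral_Ioi_add_integral_Ioi_comp_neg {E : Type*} [NormedAddCommGroup E]
    [NormedSpace ℝ E] {f : ℝ → E} (hpos : IntegrableOn f (Ioi 0))
    (hneg : IntegrableOn (fun z => f (-z)) (Ioi 0)) :
    ∫ z, f z = (∫ z in Ioi 0, f z) + ∫ z in Ioi 0, f (-z) := by
  have hIio : IntegrableOn f (Iio 0) := by
    have h := (MeasurePreserving.integrableOn_comp_preimage (Measure.measurePreserving_neg volume)
      (Homeomorph.neg ℝ).measurableEmbedding (f := fun z => f (-z)) (s := Ioi 0)).2 hneg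
    simpa [Function.comp_def] using h
  rw [integral_comp_neg_Ioi, neg_zero,
    ← intervalIntegral.integral_Iic_add_Ioi
      ((integrableOn_Iic_iff_integrableOn_Iio enorm_ne_top).2 hIio) hpos, add_comm]

lemma integral_heat_sqrt_mul_eq_integral_heatKernel₁ (f : ℝ → ℝ) {t : ℝ} (ht : 0 < t) (x : ℝ) :
    1 / (2 * √(π * t)) * ∫ y, exp (-(√t * x - y) ^ 2 / (4 * t)) * f y =
      ∫ z, heatKernel₁ x z * f (√t * z) := by
  have hσ : 0 < √t := sqrt_pos.2 ht
  have hkernel (z : ℝ) : heatKernel₁ x z * f (√t * z) =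
      1 / (2 * √(π * t)) * √t * (exp (-(√t * x - √t * z) ^ 2 / (4 * t)) * f (√t * z)) := by
    have : (√t * x - √t * z) ^ 2 / (4 * t) = (x - z) ^ 2 / 4 := by
      rw [← mul_sub, mul_pow, sq_sqrt ht.le]; field_simp
    rw [heatKernel₁, neg_div, neg_div, this, sqrt_mul pi_pos.le]
    field_simp
  simp_rw [hkernel]
  rw [integral_const_mul, Measure.integral_comp_mul_left
    (fun y => exp (-(√t * x - y) ^ 2 / (4 * t)) * f y), abs_inv, abs_of_pos hσ, smul_eq_mul]
  field_simp

section HalfLine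

variable {f : ℝ → ℝ} {M σ : ℝ}

lemma continuousOn_Ioi_comp_const_mul (hf : ∀ y > 0, DifferentiableAt ℝ f y) (hσ : 0 < σ) :
    ContinuousOn (fun z => f (σ * z)) (Ioi 0) := fun _ hz =>
  ((hf _ (mul_pos hσ hz)).continuousAt.comp
    (continuous_const_mul σ).continuousAt).continuousWithinAt

lemma integrableOn_Ioi_heatKernel₁_mul_comp_const_mul (hf : ∀ y > 0, DifferentiableAt ℝ f y)
    (hM : ∀ y > 0, |y * deriv f y| ≤ M) (hσ : 0 < σ) (x : ℝ) :
    IntegrableOn (fun z => heatKernel₁ x z * f (σ * z)) (Ioi 0) :=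
  integrableOn_mul_of_abs_sub_le measurableSet_Ioi (integrable_heatKernel₁ x).integrableOn
    (fun z _ => heatKernel₁_nonneg x z) (integrableOn_heatKernel₁_mul_abs_log x)
    ((continuousOn_Ioi_comp_const_mul hf hσ).aestronglyMeasurable measurableSet_Ioi)
    (fun _ hz => abs_sub_le_mul_abs_log_of_abs_mul_deriv_le hf hM hσ hz)

lemma abs_setIntegral_Ioi_heatKernel₁_mul_comp_const_mul_sub_le
    (hf : ∀ y > 0, DifferentiableAt ℝ f y) (hM : ∀ y > 0, |y * deriv f y| ≤ M) (hσ : 0 < σ)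
    (x : ℝ) :
    |(∫ z in Ioi 0, heatKernel₁ x z * f (σ * z)) - (∫ z in Ioi 0, heatKernel₁ x z) * f σ| ≤
      M * ∫ z in Ioi 0, heatKernel₁ x z * |log z| :=
  abs_setIntegral_mul_sub_le measurableSet_Ioi (integrable_heatKernel₁ x).integrableOn
    (fun z _ => heatKernel₁_nonneg x z) (integrableOn_heatKernel₁_mul_abs_log x)
    ((continuousOn_Ioi_comp_const_mul hf hσ).aestronglyMeasurable measurableSet_Ioi)
    (fun _ hz => abs_sub_le_mul_abs_log_of_abs_mul_deriv_le hf hM hσ hz)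

end HalfLine

theorem stmt_8 (u₀ : ℝ → ℝ) (hC1 : ContDiffOn ℝ 1 u₀ {(0:ℝ)}ᶜ)
    (Mneg Mpos : ℝ)
    (hMneg : ∀ y < (0:ℝ), |y * deriv u₀ y| ≤ Mneg)
    (hMpos : ∀ y > (0:ℝ), |y * deriv u₀ y| ≤ Mpos)
    (u : ℝ → ℝ → ℝ)
    (hu : ∀ x t, 0 < t →
      u x t = (1 / (2 * Real.sqrt (π * t))) * ∫ y : ℝ, Real.exp (-(x - y)^2 / (4 * t)) * u₀ y)
    (F : ℝ → ℝ) (hF : ∀ z, F z = (1 / (2 * Real.sqrt π)) * ∫ y in Iio z, Real.exp (-y^2 / 4))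
    (G : ℝ → ℝ)
    (hG : ∀ z, G z = (1 / (2 * Real.sqrt π)) *
      ∫ y in Ioi (0:ℝ), Real.exp (-(z - y)^2 / 4) * |Real.log y|) :
    ∀ x : ℝ, ∀ t > 0,
      |u (Real.sqrt t * x) t -
        (F (-x) * u₀ (-(Real.sqrt t)) + F x * u₀ (Real.sqrt t))| ≤
      G (-x) * Mneg + G x * Mpos := by
  intro x t ht
  have hσ : 0 < √t := sqrt_pos.2 ht
  have hdiff (y : ℝ) (hy : y ≠ 0) : DifferentiableAt ℝ u₀ y :=
    (hC1.contDiffAt (isOpen_compl_singleton.mem_nhds hy)).differentiableAt one_ne_zero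
  have hdiffPos (y : ℝ) (hy : 0 < y) : DifferentiableAt ℝ u₀ y := hdiff y hy.ne'
  have hdiffNeg (y : ℝ) (hy : 0 < y) : DifferentiableAt ℝ (fun y => u₀ (-y)) y :=
    (hdiff (-y) (neg_ne_zero.2 hy.ne')).comp y differentiableAt_id.neg
  have hMneg' (y : ℝ) (hy : 0 < y) : |y * deriv (fun y => u₀ (-y)) y| ≤ Mneg := by
    rw [deriv_comp_neg, mul_neg, ← neg_mul]
    exact hMneg (-y) (neg_neg_of_pos hy)
  have hF' (z : ℝ) : F z = ∫ y in Ioi 0, heatKernel₁ z y := by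
    rw [hF, setIntegral_Ioi_heatKernel₁]
  have hG' (z : ℝ) : G z = ∫ y in Ioi 0, heatKernel₁ z y * |log y| := by
    simp only [hG, heatKernel₁, mul_assoc, integral_const_mul]
  have hreflect : (fun z => heatKernel₁ x (-z) * u₀ (√t * -z)) =
      fun z => heatKernel₁ (-x) z * u₀ (-(√t * z)) := by
    simp only [heatKernel₁_neg_right, mul_neg]
  have hPos := abs_setIntegral_Ioi_heatKernel₁_mul_comp_const_mul_sub_le hdiffPos hMpos hσ x
  have hNeg := abs_setIntegral_Ioi_heatKernel₁_mul_comp_const_mul_sub_le hdiffNeg hMneg' hσ (-x)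
  rw [hu _ _ ht, integral_heat_sqrt_mul_eq_integral_heatKernel₁ u₀ ht,
    integral_eq_integral_Ioi_add_integral_Ioi_comp_neg
      (integrableOn_Ioi_heatKernel₁_mul_comp_const_mul hdiffPos hMpos hσ x)
      (hreflect ▸ integrableOn_Ioi_heatKernel₁_mul_comp_const_mul hdiffNeg hMneg' hσ (-x)),
    hreflect, hF', hF', hG', hG']
  rw [abs_le] at hPos hNeg ⊢
  constructor <;> linarith
end

section
/- Let u₀ : ℝ → ℝ be C¹ on ℝ \ {0} with sup_{y≠0}|y·u₀'(y)| < ∞, and define u(x,t) by heat-kernel convolution. Then for all x ∈ ℝ, t > 0: u(√t·x,t) − (F(−x)u₀(−√t) + F(x)u₀(√t)) = (1/(2√π)) ∫_0^∞ e^{−(x+z)²/4} (∫_1^z (−√t·y)u₀'(−√t·y)/y dy) dz + (1/(2√π)) ∫_0^∞ e^{−(x−z)²/4} (∫_1^z (√t·y)u₀'(√t·y)/y dy) dz, where F(z) = (1/(2√π)) ∫_{−∞}^z e^{−y²/4} dy. -/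
/-!
Substituting `y = √t z` in the heat integral and splitting the line at `0` gives
`u(√t x, t) = (1/(2√π)) (∫₀^∞ e^{-(x+z)²/4} u₀(-√t z) dz + ∫₀^∞ e^{-(x-z)²/4} u₀(√t z) dz)`,
while `F(±x) = (1/(2√π)) ∫₀^∞ e^{-(±x-z)²/4} dz`. For `c ≠ 0` the inner integral
`∫₁^z (c y) u₀'(c y) / y dy` is `u₀(c z) - u₀(c)` by the fundamental theorem of calculus, so the
identity is the difference of these formulas. Everything converges because `|y u₀'(y)| ≤ M` gives
`|u₀(c z) - u₀(c)| ≤ M |log z| ≤ 2M (√z + 1/√z)`, which the Gaussian weight integrates on `(0, ∞)`.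
-/

open Real MeasureTheory Set

section HalfLine

variable {E : Type*} [NormedAddCommGroup E] [NormedSpace ℝ E]

theorem integral_Iio_eq_integral_Ioi_comp_sub (g : ℝ → E) (x : ℝ) :
    ∫ y in Iio x, g y = ∫ z in Ioi 0, g (x - z) := by
  have h := (volume.measurePreserving_sub_left x).setIntegral_preimage_emb
    (MeasurableEquiv.subLeft x).measurableEmbedding g (Iio x)
  have hpre : (fun z : ℝ => x - z) ⁻¹' Iio x = Ioi 0 := by ext z; simp
  exact hpre ▸ h.symm

theorem integral_eq_integral_Ioi_comp_neg_add_s14 {f : ℝ → E}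
    (hneg : IntegrableOn (fun z => f (-z)) (Ioi 0)) (hpos : IntegrableOn f (Ioi 0)) :
    ∫ z, f z = (∫ z in Ioi 0, f (-z)) + ∫ z in Ioi 0, f z := by
  have hIic : IntegrableOn f (Iic 0) := by
    rw [← Measure.map_neg_eq_self (volume : Measure ℝ)]
    have neg : MeasurableEmbedding fun x : ℝ => -x := (Homeomorph.neg ℝ).measurableEmbedding
    rw [neg.integrableOn_map_iff]
    simp only [Function.comp_def, neg_preimage, neg_Iic, neg_zero]
    exact (integrableOn_Ici_iff_integrableOn_Ioi).2 hneg
  have h : ∫ z in Ioi (0 : ℝ), f (-z) = ∫ z in Iic 0, f z := by simp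
  rw [h, intervalIntegral.integral_Iic_add_Ioi hIic hpos]

end HalfLine

theorem abs_log_le_rpow_add_rpow_neg {z : ℝ} (hz : 0 < z) :
    |log z| ≤ 2 * z ^ (1 / 2 : ℝ) + 2 * z ^ (-(1 / 2) : ℝ) := by
  have hup := log_le_rpow_div hz.le (one_half_pos (α := ℝ))
  have hlow := log_le_rpow_div (inv_nonneg.2 hz.le) (one_half_pos (α := ℝ))
  rw [log_inv, inv_rpow hz.le, ← rpow_neg hz.le] at hlow
  have h1 : 0 ≤ z ^ (1 / 2 : ℝ) := rpow_nonneg hz.le _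
  have h2 : 0 ≤ z ^ (-(1 / 2) : ℝ) := rpow_nonneg hz.le _
  rw [abs_le]
  constructor <;> linarith

theorem integrableOn_Ioi_rpow_mul_exp_neg_sub_sq (x : ℝ) {s : ℝ} (hs : -1 < s) :
    IntegrableOn (fun z : ℝ => z ^ s * exp (-(x - z) ^ 2 / 4)) (Ioi 0) := by
  -- domination by `e^{x²/4} z^s e^{-z²/8}`, from `(x - z)² / 4 ≥ z² / 8 - x² / 4`
  have hdom := (integrableOn_rpow_mul_exp_neg_mul_sq (b := 1 / 8) (by norm_num) hs).const_mul
    (exp (x ^ 2 / 4))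
  refine hdom.mono' ?_ ?_
  · refine ContinuousOn.aestronglyMeasurable ?_ measurableSet_Ioi
    exact (continuousOn_id.rpow_const fun z hz => Or.inl hz.ne').mul (by fun_prop)
  · filter_upwards [ae_restrict_mem measurableSet_Ioi] with z hz
    have hexp : exp (-(x - z) ^ 2 / 4) ≤ exp (x ^ 2 / 4) * exp (-(1 / 8) * z ^ 2) := by
      rw [← exp_add]
      exact exp_le_exp.2 (by nlinarith [sq_nonneg (2 * x - z)])
    have hzs : 0 ≤ z ^ s := rpow_nonneg (le_of_lt hz) s
    rw [norm_of_nonneg (by positivity)]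
    calc z ^ s * exp (-(x - z) ^ 2 / 4)
        ≤ z ^ s * (exp (x ^ 2 / 4) * exp (-(1 / 8) * z ^ 2)) := by gcongr
      _ = exp (x ^ 2 / 4) * (z ^ s * exp (-(1 / 8) * z ^ 2)) := by ring

theorem integral_heat_kernel_comp_sqrt_mul (u₀ : ℝ → ℝ) (x : ℝ) {t : ℝ} (ht : 0 < t) :
    (1 / (2 * √(π * t))) * ∫ y : ℝ, exp (-(√t * x - y) ^ 2 / (4 * t)) * u₀ y =
      (1 / (2 * √π)) * ∫ z : ℝ, exp (-(x - z) ^ 2 / 4) * u₀ (√t * z) := by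
  have hs : 0 < √t := sqrt_pos.2 ht
  have hscale := Measure.integral_comp_mul_left
    (fun y => exp (-(√t * x - y) ^ 2 / (4 * t)) * u₀ y) (√t)
  have hkernel : ∀ z : ℝ, -(√t * x - √t * z) ^ 2 / (4 * t) = -(x - z) ^ 2 / 4 := by
    intro z
    rw [← mul_sub, mul_pow, sq_sqrt ht.le]
    field_simp
  simp only [hkernel, abs_inv, abs_of_pos hs, smul_eq_mul] at hscale
  rw [hscale, sqrt_mul pi_pos.le]
  field_simp

section InitialDatum

variable {u₀ : ℝ → ℝ} {c : ℝ}

theorem integral_mul_deriv_comp_mul_div_eq_sub (hC1 : ContDiffOn ℝ 1 u₀ {0}ᶜ) (hc : c ≠ 0)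
    {z : ℝ} (hz : 0 < z) :
    ∫ y in (1 : ℝ)..z, (c * y) * deriv u₀ (c * y) / y = u₀ (c * z) - u₀ c := by
  have hpos : ∀ y ∈ uIcc 1 z, 0 < y := fun y hy => (lt_min one_pos hz).trans_le hy.1
  have hcy : ∀ y ∈ uIcc 1 z, c * y ≠ 0 := fun y hy => mul_ne_zero hc (hpos y hy).ne'
  have hcancel : ∀ y ∈ uIcc 1 z, (c * y) * deriv u₀ (c * y) / y = c * deriv u₀ (c * y) :=
    fun y hy => by field_simp [(hpos y hy).ne']
  rw [intervalIntegral.integral_congr hcancel]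
  have hderiv : ∀ y ∈ uIcc 1 z, HasDerivAt (fun y => u₀ (c * y)) (c * deriv u₀ (c * y)) y := by
    intro y hy
    have hdiff : DifferentiableAt ℝ u₀ (c * y) :=
      (hC1.contDiffAt (isOpen_compl_singleton.mem_nhds (hcy y hy))).differentiableAt one_ne_zero
    simpa [mul_comm, Function.comp_def] using
      hdiff.hasDerivAt.comp y ((hasDerivAt_id y).const_mul c)
  have hcont : ContinuousOn (deriv u₀) {0}ᶜ :=
    hC1.continuousOn_deriv_of_isOpen isOpen_compl_singleton le_rfl
  refine intervalIntegral.integral_eq_sub_of_hasDerivAt hderiv ?_ |>.trans (by simp)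
  exact (continuousOn_const.mul
    (hcont.comp (continuous_const_mul c).continuousOn hcy)).intervalIntegrable

theorem abs_comp_mul_sub_le_mul_abs_log (hC1 : ContDiffOn ℝ 1 u₀ {0}ᶜ) {M : ℝ}
    (hM : ∀ y : ℝ, y ≠ 0 → |y * deriv u₀ y| ≤ M) (hc : c ≠ 0) {z : ℝ} (hz : 0 < z) :
    |u₀ (c * z) - u₀ c| ≤ M * |log z| := by
  have hM0 : 0 ≤ M := (abs_nonneg _).trans (hM 1 one_ne_zero)
  have hpos : ∀ y ∈ uIcc 1 z, 0 < y := fun y hy => (lt_min one_pos hz).trans_le hy.1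
  have hbound : ∀ᵐ y ∂volume.restrict (uIoc 1 z), ‖(c * y) * deriv u₀ (c * y) / y‖ ≤ M * y⁻¹ := by
    filter_upwards [ae_restrict_mem measurableSet_uIoc] with y hy
    have hy : 0 < y := hpos y (uIoc_subset_uIcc hy)
    rw [norm_div, norm_of_nonneg hy.le, div_eq_mul_inv]
    gcongr
    exact hM _ (mul_ne_zero hc hy.ne')
  have hinv : IntervalIntegrable (fun y => M * y⁻¹) volume 1 z :=
    (continuousOn_const.mul (continuousOn_inv₀.mono fun y hy => (hpos y hy).ne')).intervalIntegrable
  calc |u₀ (c * z) - u₀ c|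
      = ‖∫ y in (1 : ℝ)..z, (c * y) * deriv u₀ (c * y) / y‖ := by
        rw [integral_mul_deriv_comp_mul_div_eq_sub hC1 hc hz, norm_eq_abs]
    _ ≤ |∫ y in (1 : ℝ)..z, M * y⁻¹| := intervalIntegral.norm_integral_le_abs_of_norm_le hbound hinv
    _ = M * |log z| := by
        rw [intervalIntegral.integral_const_mul, integral_inv_of_pos one_pos hz, div_one, abs_mul,
          abs_of_nonneg hM0]

theorem integrableOn_Ioi_exp_neg_sub_sq_mul_comp_mul (hC1 : ContDiffOn ℝ 1 u₀ {0}ᶜ) {M : ℝ}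
    (hM : ∀ y : ℝ, y ≠ 0 → |y * deriv u₀ y| ≤ M) (x : ℝ) (hc : c ≠ 0) :
    IntegrableOn (fun z => exp (-(x - z) ^ 2 / 4) * u₀ (c * z)) (Ioi 0) := by
  have hdom := (((integrableOn_Ioi_rpow_mul_exp_neg_sub_sq x (s := 0) (by norm_num)).const_mul
      |u₀ c|).add ((integrableOn_Ioi_rpow_mul_exp_neg_sub_sq x (s := 1 / 2) (by norm_num)).const_mul
      (2 * M))).add ((integrableOn_Ioi_rpow_mul_exp_neg_sub_sq x (s := -(1 / 2))
      (by norm_num)).const_mul (2 * M))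
  refine hdom.mono' ?_ ?_
  · refine ContinuousOn.aestronglyMeasurable ?_ measurableSet_Ioi
    refine (by fun_prop : Continuous fun z => exp (-(x - z) ^ 2 / 4)).continuousOn.mul ?_
    exact hC1.continuousOn.comp (continuous_const_mul c).continuousOn
      fun z hz => mul_ne_zero hc (ne_of_gt hz)
  · filter_upwards [ae_restrict_mem measurableSet_Ioi] with z hz
    have hM0 : 0 ≤ M := (abs_nonneg _).trans (hM 1 one_ne_zero)
    have hgrowth :
        |u₀ (c * z)| ≤ |u₀ c| + 2 * M * z ^ (1 / 2 : ℝ) + 2 * M * z ^ (-(1 / 2) : ℝ) := by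
      have hdiff := abs_comp_mul_sub_le_mul_abs_log hC1 hM hc hz
      have hlog := mul_le_mul_of_nonneg_left (abs_log_le_rpow_add_rpow_neg hz) hM0
      have htri := abs_sub_abs_le_abs_sub (u₀ (c * z)) (u₀ c)
      linarith
    rw [norm_mul, norm_of_nonneg (exp_pos _).le, norm_eq_abs]
    simp only [Pi.add_apply, rpow_zero]
    calc exp (-(x - z) ^ 2 / 4) * |u₀ (c * z)|
        ≤ exp (-(x - z) ^ 2 / 4) *
            (|u₀ c| + 2 * M * z ^ (1 / 2 : ℝ) + 2 * M * z ^ (-(1 / 2) : ℝ)) := by gcongr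
      _ = _ := by ring

theorem integral_Ioi_exp_neg_sub_sq_mul_integral_eq_sub (hC1 : ContDiffOn ℝ 1 u₀ {0}ᶜ) {M : ℝ}
    (hM : ∀ y : ℝ, y ≠ 0 → |y * deriv u₀ y| ≤ M) (x : ℝ) (hc : c ≠ 0) :
    ∫ z in Ioi 0, exp (-(x - z) ^ 2 / 4) * ∫ y in (1 : ℝ)..z, (c * y) * deriv u₀ (c * y) / y =
      (∫ z in Ioi 0, exp (-(x - z) ^ 2 / 4) * u₀ (c * z)) -
        (∫ z in Ioi 0, exp (-(x - z) ^ 2 / 4)) * u₀ c := by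
  have hgauss : IntegrableOn (fun z : ℝ => exp (-(x - z) ^ 2 / 4)) (Ioi 0) := by
    simpa using integrableOn_Ioi_rpow_mul_exp_neg_sub_sq x (s := 0) (by norm_num)
  rw [← integral_mul_const, ← integral_sub
    (integrableOn_Ioi_exp_neg_sub_sq_mul_comp_mul hC1 hM x hc) (hgauss.mul_const _)]
  refine setIntegral_congr_fun measurableSet_Ioi fun z hz => ?_
  rw [integral_mul_deriv_comp_mul_div_eq_sub hC1 hc hz]
  ring

end InitialDatum

theorem stmt_14 (u₀ : ℝ → ℝ) (hC1 : ContDiffOn ℝ 1 u₀ {(0:ℝ)}ᶜ)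
    (M : ℝ) (hM : ∀ y : ℝ, y ≠ 0 → |y * deriv u₀ y| ≤ M)
    (u : ℝ → ℝ → ℝ)
    (hu : ∀ x t, 0 < t →
      u x t = (1 / (2 * Real.sqrt (π * t))) * ∫ y : ℝ, Real.exp (-(x - y)^2 / (4 * t)) * u₀ y)
    (F : ℝ → ℝ) (hF : ∀ z, F z = (1 / (2 * Real.sqrt π)) * ∫ y in Iio z, Real.exp (-y^2 / 4)) :
    ∀ x : ℝ, ∀ t > 0,
      u (Real.sqrt t * x) t -
          (F (-x) * u₀ (-(Real.sqrt t)) + F x * u₀ (Real.sqrt t)) =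
        (1 / (2 * Real.sqrt π)) *
            (∫ z in Ioi (0:ℝ), Real.exp (-(x + z)^2 / 4) *
              ∫ y in (1:ℝ)..z, (-(Real.sqrt t) * y) * deriv u₀ (-(Real.sqrt t) * y) / y) +
        (1 / (2 * Real.sqrt π)) *
            (∫ z in Ioi (0:ℝ), Real.exp (-(x - z)^2 / 4) *
              ∫ y in (1:ℝ)..z, (Real.sqrt t * y) * deriv u₀ (Real.sqrt t * y) / y) := by
  intro x t ht
  have hs : √t ≠ 0 := (sqrt_pos.2 ht).ne'
  have hreflect : ∀ z : ℝ, exp (-(x - -z) ^ 2 / 4) * u₀ (√t * -z) =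
      exp (-(-x - z) ^ 2 / 4) * u₀ (-√t * z) := fun z => by ring_nf
  have hsym : ∀ z : ℝ, exp (-(x + z) ^ 2 / 4) = exp (-(-x - z) ^ 2 / 4) := fun z => by ring_nf
  have hneg := integrableOn_Ioi_exp_neg_sub_sq_mul_comp_mul hC1 hM (-x) (neg_ne_zero.2 hs)
  rw [hu _ _ ht, integral_heat_kernel_comp_sqrt_mul _ _ ht,
    integral_eq_integral_Ioi_comp_neg_add_s14 (by simpa only [hreflect] using hneg)
      (integrableOn_Ioi_exp_neg_sub_sq_mul_comp_mul hC1 hM x hs)]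
  simp only [hreflect, hsym, hF, integral_Iio_eq_integral_Ioi_comp_sub]
  rw [integral_Ioi_exp_neg_sub_sq_mul_integral_eq_sub hC1 hM x hs,
    integral_Ioi_exp_neg_sub_sq_mul_integral_eq_sub hC1 hM (-x) (neg_ne_zero.2 hs)]
  ring
end
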